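/- arXiv:q-bio/0702048 — 3 statements merged into one kernel-verified Lean document; each statement's English description precedes it below -/
import Mathlib

section
/- For r > 1, m > 0, and any x₀ > 0, the iterates of the Beverton-Holt map x_{n+1} = r·x_n/(1 + m·x_n) converge to (r − 1)/m as n → ∞. -/
/-!
Under `y = 1 / x` the Beverton–Holt map becomes the affine contraction `y ↦ (y + m) / r`,
whose iterates converge geometrically to its fixed point `m / (r - 1)`; inverting back gives
the limit `(r - 1) / m`.
-/

open Filter Topology

section AffineIterate

variable {𝕜 : Type*} [NormedField 𝕜]

theorem iterate_affine_eq (a b y : 𝕜) (ha : a ≠ 1) (n : ℕ) :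
    (fun y => a * y + b)^[n] y = a ^ n * (y - b / (1 - a)) + b / (1 - a) := by
  have h1a : 1 - a ≠ 0 := sub_ne_zero.mpr ha.symm
  induction n with
  | zero => simp
  | succ n ih =>
    rw [Function.iterate_succ_apply', ih]
    field_simp
    ring

theorem tendsto_iterate_affine (a b y : 𝕜) (ha : ‖a‖ < 1) :
    Tendsto (fun n : ℕ => (fun y => a * y + b)^[n] y) atTop (𝓝 (b / (1 - a))) := by
  have ha1 : a ≠ 1 := by rintro rfl; simp at ha
  simp only [iterate_affine_eq a b y ha1]
  simpa using ((tendsto_pow_atTop_nhds_zero_of_norm_lt_one ha).mul_const (y - b / (1 - a))).add_const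
    (b / (1 - a))

end AffineIterate

section BevertonHolt

noncomputable def bevertonHolt (r m x : ℝ) : ℝ := r * x / (1 + m * x)

variable {r m : ℝ}

theorem bevertonHolt_pos (hr : 0 < r) (hm : 0 ≤ m) {x : ℝ} (hx : 0 < x) :
    0 < bevertonHolt r m x := by
  unfold bevertonHolt
  positivity

theorem inv_bevertonHolt (hr : r ≠ 0) {x : ℝ} (hx : x ≠ 0) :
    (bevertonHolt r m x)⁻¹ = r⁻¹ * x⁻¹ + r⁻¹ * m := by
  unfold bevertonHolt
  field_simp

theorem iterate_bevertonHolt_eq_inv (hr : 0 < r) (hm : 0 ≤ m) (n : ℕ) {x : ℝ} (hx : 0 < x) :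
    (bevertonHolt r m)^[n] x = ((fun y => r⁻¹ * y + r⁻¹ * m)^[n] x⁻¹)⁻¹ := by
  induction n generalizing x with
  | zero => simp
  | succ n ih =>
    rw [Function.iterate_succ_apply, Function.iterate_succ_apply, ih (bevertonHolt_pos hr hm hx),
      inv_bevertonHolt hr.ne' hx.ne']

end BevertonHolt

theorem stmt_4 (r m x₀ : ℝ) (hr : 1 < r) (hm : 0 < m) (hx₀ : 0 < x₀) :
    Filter.Tendsto (fun n : ℕ => (fun x : ℝ => r * x / (1 + m * x))^[n] x₀)
      Filter.atTop (nhds ((r - 1) / m)) := by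
  have hr₀ : 0 < r := by linarith
  have hr₁ : r - 1 ≠ 0 := by linarith
  have hcontr : ‖r⁻¹‖ < 1 := by
    rw [norm_inv, Real.norm_of_nonneg hr₀.le]
    exact inv_lt_one_of_one_lt₀ hr
  have hfix : r⁻¹ * m / (1 - r⁻¹) = m / (r - 1) := by
    field_simp
  have hrecip := tendsto_iterate_affine (r⁻¹) (r⁻¹ * m) x₀⁻¹ hcontr
  rw [hfix] at hrecip
  have hlim := hrecip.inv₀ (by positivity)
  rw [inv_div] at hlim
  exact hlim.congr fun n => (iterate_bevertonHolt_eq_inv hr₀ hm.le n hx₀).symm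
end

section
/- For the continuous Beverton-Holt model with r > 1, m > 0 and fixed t > 0, the per-capita growth (x_t − x₀)/x₀ tends to −1 as the initial population x₀ tends to infinity (the One-Life Rule). -/
theorem stmt_7 (r m t : ℝ) (hr : 1 < r) (hm : 0 < m) (ht : 0 < t) :
    Filter.Tendsto
      (fun x₀ : ℝ =>
        (r ^ t * x₀ / (1 + m * ((r ^ t - 1) / (r - 1)) * x₀) - x₀) / x₀)
      Filter.atTop (nhds (-1)) := by
  have hrt : 1 < r ^ t := Real.one_lt_rpow_iff_of_pos (by linarith) |>.mpr (Or.inl ⟨hr, ht⟩)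
  set c := m * ((r ^ t - 1) / (r - 1)) with hc
  have hcpos : 0 < c := by
    apply mul_pos hm
    apply div_pos <;> linarith
  have h1 : Filter.Tendsto (fun x : ℝ => 1 + c * x) Filter.atTop Filter.atTop := by
    apply Filter.tendsto_atTop_add_const_left
    exact Filter.Tendsto.const_mul_atTop hcpos Filter.tendsto_id
  have h2 : Filter.Tendsto (fun x : ℝ => r ^ t / (1 + c * x) - 1) Filter.atTop (nhds (-1)) := by
    have := (Filter.Tendsto.div_atTop (tendsto_const_nhds (x := r ^ t)) h1).sub
      (tendsto_const_nhds (x := (1:ℝ)))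
    simpa using this
  apply h2.congr'
  filter_upwards [Filter.eventually_gt_atTop 0, h1.eventually_gt_atTop 0] with x hx hx1
  field_simp
end

section
/- There is no jointly continuously differentiable family φ : ℝ≥0 × ℝ → ℝ satisfying the semiflow group property φ(s+t, x) = φ(s, φ(t, x)) and φ(0, x) = x on an interval containing [0,1], such that φ(t₀, ·) coincides on that interval with the logistic map Q(x) = r·x·(1−x) for some t₀ > 0 and some r > 3. -/
theorem stmt_11 :
    ¬ ∃ (φ : ℝ → ℝ → ℝ) (t₀ r a b : ℝ),
        ContDiff ℝ 1 (fun p : ℝ × ℝ => φ p.1 p.2) ∧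
        (∀ s t : ℝ, 0 ≤ s → 0 ≤ t → ∀ x : ℝ, φ (s + t) x = φ s (φ t x)) ∧
        (∀ x : ℝ, φ 0 x = x) ∧
        0 < t₀ ∧ 3 < r ∧
        Set.Icc (0 : ℝ) 1 ⊆ Set.Icc a b ∧
        (∀ x ∈ Set.Icc a b, φ t₀ x = r * x * (1 - x)) := by
  rintro ⟨φ, t₀, r, a, b, hC1, hgrp, h0, ht₀, hr, hsub, hQ⟩
  have hcont : Continuous (fun p : ℝ × ℝ => φ p.1 p.2) := hC1.continuous
  have hr0 : (0 : ℝ) < r := by linarith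
  have h2r : (0 : ℝ) < 2 * r := by linarith
  -- the period-2 orbit of the logistic map
  set s : ℝ := Real.sqrt ((r + 1) * (r - 3)) with hs
  have hprod : 0 < (r + 1) * (r - 3) := by nlinarith
  have hs2 : s ^ 2 = (r + 1) * (r - 3) := Real.sq_sqrt hprod.le
  have hspos : 0 < s := Real.sqrt_pos.mpr hprod
  set u : ℝ := (r + 1 - s) / (2 * r) with hu
  set v : ℝ := (r + 1 + s) / (2 * r) with hv
  have hsr1 : s < r - 1 := by nlinarith
  have hu0 : 0 < u := div_pos (by linarith) h2r
  have hv1 : v < 1 := by rw [hv, div_lt_one h2r]; linarith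
  have huv : u < v := by rw [hu, hv, div_lt_div_iff₀ h2r h2r]; nlinarith
  have humem : u ∈ Set.Icc a b := hsub ⟨hu0.le, by linarith⟩
  have hvmem : v ∈ Set.Icc a b := hsub ⟨by linarith, hv1.le⟩
  -- φ t₀ swaps u and v
  have hgu : φ t₀ u = v := by
    rw [hQ u humem, hu, hv]
    field_simp
    ring_nf
    nlinarith [hs2]
  have hgv : φ t₀ v = u := by
    rw [hQ v hvmem, hu, hv]
    field_simp
    ring_nf
    nlinarith [hs2]
  -- the orbit of u
  set h : ℝ → ℝ := fun t => φ t u with hh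
  have hhc : Continuous h := hcont.comp (continuous_id.prodMk continuous_const)
  have h2per : φ (2 * t₀) u = u := by
    rw [show 2 * t₀ = t₀ + t₀ by ring, hgrp t₀ t₀ ht₀.le ht₀.le, hgu, hgv]
  have hper : ∀ t : ℝ, 0 ≤ t → h (t + 2 * t₀) = h t := by
    intro t ht
    show φ (t + 2 * t₀) u = φ t u
    rw [hgrp t (2 * t₀) ht (by linarith), h2per]
  -- the orbit interval
  set S : Set ℝ := h '' Set.Icc 0 (2 * t₀) with hS
  set m : ℝ := sInf S with hm
  set M : ℝ := sSup S with hM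
  have himg : S = Set.Icc m M :=
    ContinuousOn.image_Icc (by linarith) hhc.continuousOn
  have huS : u ∈ S := ⟨0, ⟨le_refl 0, by linarith⟩, h0 u⟩
  have hvS : v ∈ S := ⟨t₀, ⟨ht₀.le, by linarith⟩, hgu⟩
  have hmM : m ≤ M := by
    rcases (himg ▸ huS) with ⟨h1, h2⟩
    linarith
  -- the half-time map
  set k : ℝ → ℝ := fun x => φ (t₀ / 2) x with hk
  have hkc : Continuous k := hcont.comp (continuous_const.prodMk continuous_id)
  have ht2 : (0 : ℝ) ≤ t₀ / 2 := by linarith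
  have hkk : ∀ x : ℝ, φ t₀ x = k (k x) := by
    intro x
    show φ t₀ x = φ (t₀ / 2) (φ (t₀ / 2) x)
    rw [← hgrp (t₀ / 2) (t₀ / 2) ht2 ht2]
    norm_num
  -- orbit points: φ applied after arbitrary nonneg time stays in S
  have horb : ∀ τ : ℝ, 0 ≤ τ → h τ ∈ S := by
    intro τ hτ
    obtain ⟨n, hn⟩ := Archimedean.arch τ (by linarith : (0:ℝ) < 2 * t₀)
    induction n generalizing τ with
    | zero =>
        simp at hn
        exact ⟨τ, ⟨hτ, by linarith⟩, rfl⟩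
    | succ n ih =>
        rcases le_or_gt τ (2 * t₀) with hle | hlt
        · exact ⟨τ, ⟨hτ, hle⟩, rfl⟩
        · have h1 : h τ = h (τ - 2 * t₀) := by
            have := hper (τ - 2 * t₀) (by linarith)
            rw [sub_add_cancel] at this
            exact this
          rw [h1]
          have hn2 : τ - 2 * t₀ ≤ n • (2 * t₀) := by
            rw [nsmul_eq_mul] at hn ⊢
            push_cast at hn ⊢
            linarith
          exact ih (τ - 2 * t₀) (by linarith) hn2
  -- φ after nonneg time maps S into S
  have hmaps : ∀ τ : ℝ, 0 ≤ τ → ∀ x ∈ S, φ τ x ∈ S := by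
    rintro τ hτ x ⟨σ, ⟨hσ0, hσ2⟩, rfl⟩
    have : φ τ (h σ) = h (τ + σ) := (hgrp τ σ hτ hσ0 u).symm
    rw [this]
    exact horb (τ + σ) (by linarith)
  -- φ (2 t₀) is the identity on S
  have hid : ∀ x ∈ S, φ t₀ (φ t₀ x) = x := by
    rintro x ⟨σ, ⟨hσ0, hσ2⟩, rfl⟩
    have e1 : φ t₀ (φ t₀ (h σ)) = h (t₀ + (t₀ + σ)) := by
      show φ t₀ (φ t₀ (φ σ u)) = φ (t₀ + (t₀ + σ)) u
      rw [hgrp t₀ (t₀ + σ) ht₀.le (by linarith), hgrp t₀ σ ht₀.le hσ0]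
    rw [e1, show t₀ + (t₀ + σ) = σ + 2 * t₀ by ring, hper σ hσ0]
  -- k is injective on S
  have hinj : Set.InjOn k (Set.Icc m M) := by
    rw [← himg]
    intro x hx y hy hxy
    have e1 : φ t₀ x = φ t₀ y := by rw [hkk x, hkk y, hxy]
    have e2 : φ t₀ (φ t₀ x) = φ t₀ (φ t₀ y) := by rw [e1]
    rw [hid x hx, hid y hy] at e2
    exact e2
  -- k is strictly monotone or antitone on [m, M]; either way φ t₀ = k ∘ k
  -- is strictly increasing on S, contradicting that it swaps u < v.
  have hkS : ∀ x ∈ S, k x ∈ S := fun x hx => hmaps (t₀ / 2) ht2 x hx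
  have hmono : ∀ x ∈ S, ∀ y ∈ S, x < y → φ t₀ x < φ t₀ y := by
    rcases ContinuousOn.strictMonoOn_of_injOn_Icc' hmM hkc.continuousOn hinj with
      hmon | hant
    · intro x hx y hy hxy
      rw [hkk x, hkk y]
      have h1 : k x < k y := hmon (himg ▸ hx) (himg ▸ hy) hxy
      exact hmon (himg ▸ hkS x hx) (himg ▸ hkS y hy) h1
    · intro x hx y hy hxy
      rw [hkk x, hkk y]
      have h1 : k y < k x := hant (himg ▸ hx) (himg ▸ hy) hxy
      exact hant (himg ▸ hkS y hy) (himg ▸ hkS x hx) h1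
  have : v < u := by
    have := hmono u huS v hvS huv
    rwa [hgu, hgv] at this
  linarith
end
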